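/- Suppose for each prime p an S_n-field K satisfies: p ramified or Frob_p ∉ C occurs with 'probability' (1−c+f(q))/(1+f(q)) at q independently, in the sense that the number of K ∈ L(X) with n_{K,C} = q is [(1−c+f(q))/(1+f(q))]·∏_{p<q}[c/(1+f(p))]·A·X + O(X^{(1+3δ)/4}). Then ∑_{K ∈ L(X), n_{K,C} ≤ y} n_{K,C} = A·X·∑_q q·(1−c+f(q))/(1+f(q))·∏_{p<q} c/(1+f(p)) + O(X/log X + y²X^{(1+3δ)/4} + X·∑_{q>y} q·c^{π(q)}), where y = κ·log X. -/

import Mathlib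

/-!
Grouping the fields by the value `q = n_{K,C}` turns the truncated sum into
`∑_{q ≤ y} q · #{K : n_{K,C} = q}`. Replacing each count by its main term costs at most
`q · C₁ X^{(1+3δ)/4}` per prime, and `∑_{q ≤ y} q ≤ y²`. What is left is `A X` times the
tail `∑_{q > y}` of the main series, whose terms are at most `q c^{π(q)} / c` because each
factor `c / (1 + f p)` is at most `c`. Chebyshev's bound `π(N) ≫ N / log N` makes
`∑ N c^{π(N)}` converge, so every infinite sum involved is a genuine one.
-/

open Finset Filter Asymptotics

lemma eventually_mul_log_le_primeCounting (K : ℝ) :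
    ∀ᶠ N : ℕ in atTop, K * Real.log N ≤ N.primeCounting := by
  have hlittle : (fun x : ℝ => K * Real.log x ^ 2 + 2 * Real.log x) =o[atTop] id :=
    (Real.isLittleO_pow_log_id_atTop.const_mul_left K).add
      (Real.isLittleO_log_id_atTop.const_mul_left 2)
  filter_upwards [(hlittle.bound (Real.log_pos one_lt_two)).natCast_atTop,
    eventually_ge_atTop 2] with N hbound hN
  have hN' : (2 : ℝ) ≤ N := by exact_mod_cast hN
  have hlogN : 0 < Real.log N := Real.log_pos (by linarith)
  have hlog_succ : Real.log (N + 1) ≤ 2 * Real.log N := by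
    calc Real.log (N + 1) ≤ Real.log ((N : ℝ) ^ 2) :=
          Real.log_le_log (by positivity) (by nlinarith)
      _ = 2 * Real.log N := by rw [Real.log_pow]; norm_num
  have hsmall := (le_abs_self _).trans hbound
  simp only [Real.norm_eq_abs, id, abs_of_pos (by linarith : (0 : ℝ) < N)] at hsmall
  refine le_trans ?_ (Chebyshev.pi_ge N)
  rw [le_div_iff₀ hlogN]
  nlinarith

lemma summable_mul_pow_primeCounting {c : ℝ} (hc0 : 0 < c) (hc1 : c < 1) :
    Summable fun N : ℕ => (N : ℝ) * c ^ N.primeCounting := by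
  have hlogc : Real.log c < 0 := Real.log_neg hc0 hc1
  refine Summable.of_norm_bounded_eventually_nat
    (Real.summable_nat_rpow.mpr (by norm_num : (-2 : ℝ) < -1)) ?_
  filter_upwards [eventually_mul_log_le_primeCounting (-3 / Real.log c),
    eventually_ge_atTop 1] with N hN hN1
  have hN0 : (0 : ℝ) < N := by exact_mod_cast hN1
  have hpow : c ^ N.primeCounting ≤ (N : ℝ) ^ (-3 : ℝ) := by
    calc c ^ N.primeCounting = c ^ (N.primeCounting : ℝ) := (Real.rpow_natCast _ _).symm
      _ ≤ c ^ (-3 / Real.log c * Real.log N) :=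
        Real.rpow_le_rpow_of_exponent_ge hc0 hc1.le hN
      _ = (N : ℝ) ^ (-3 : ℝ) := by
        rw [Real.rpow_def_of_pos hc0, Real.rpow_def_of_pos hN0]
        congr 1
        field_simp [hlogc.ne]
  rw [Real.norm_of_nonneg (by positivity)]
  calc (N : ℝ) * c ^ N.primeCounting ≤ N * (N : ℝ) ^ (-3 : ℝ) := by gcongr
    _ = (N : ℝ) ^ (-2 : ℝ) := by
      rw [← Real.rpow_one_add' hN0.le (by norm_num)]
      norm_num

lemma mem_primesLE_floor_iff {q : ℕ} {y : ℝ} :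
    q ∈ Nat.primesLE ⌊y⌋₊ ↔ q.Prime ∧ (q : ℝ) ≤ y := by
  rw [Nat.mem_primesLE, and_comm]
  exact and_congr_right fun hq => Nat.le_floor_iff' hq.ne_zero

lemma sum_primesLE_le_sq (n : ℕ) : ∑ q ∈ Nat.primesLE n, q ≤ n ^ 2 := by
  have hcard : #(Nat.primesLE n) ≤ n := by
    calc #(Nat.primesLE n) ≤ #(Icc 1 n) := card_le_card fun q hq => by
          obtain ⟨hqn, hq⟩ := Nat.mem_primesLE.mp hq
          exact mem_Icc.mpr ⟨hq.one_lt.le, hqn⟩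
      _ = n := by simp
  calc ∑ q ∈ Nat.primesLE n, q ≤ #(Nat.primesLE n) • n :=
        sum_le_card_nsmul _ _ _ fun q hq => (Nat.mem_primesLE.mp hq).1
    _ ≤ n ^ 2 := by rw [smul_eq_mul, sq]; gcongr

lemma sum_primesLE_floor_le_sq (y : ℝ) :
    ∑ q ∈ Nat.primesLE ⌊y⌋₊, (q : ℝ) ≤ y ^ 2 := by
  calc ∑ q ∈ Nat.primesLE ⌊y⌋₊, (q : ℝ) ≤ (⌊y⌋₊ : ℝ) ^ 2 := by
        rw [← Nat.cast_sum, ← Nat.cast_pow]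
        exact Nat.cast_le.mpr (sum_primesLE_le_sq ⌊y⌋₊)
    _ ≤ y ^ 2 := by
      rcases le_or_gt 0 y with hy | hy
      · gcongr
        exact Nat.floor_le hy
      · simp [Nat.floor_of_nonpos hy.le, sq_nonneg]

lemma sum_filter_natCast_le_eq_sum_primesLE {ι : Type*} (s : Finset ι) (g : ι → ℕ)
    (hg : ∀ K ∈ s, (g K).Prime) (y : ℝ) :
    ∑ K ∈ s.filter (fun K => (g K : ℝ) ≤ y), (g K : ℝ)
      = ∑ q ∈ Nat.primesLE ⌊y⌋₊, (q : ℝ) * #(s.filter (fun K => g K = q)) := by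
  have hmaps : ∀ K ∈ s.filter (fun K => (g K : ℝ) ≤ y), g K ∈ Nat.primesLE ⌊y⌋₊ := by
    intro K hK
    obtain ⟨hKs, hKy⟩ := mem_filter.mp hK
    exact mem_primesLE_floor_iff.mpr ⟨hg K hKs, hKy⟩
  rw [← sum_fiberwise_of_maps_to' hmaps]
  refine sum_congr rfl fun q hq => ?_
  have hqy : (q : ℝ) ≤ y := (mem_primesLE_floor_iff.mp hq).2
  rw [filter_filter, sum_const, nsmul_eq_mul, mul_comm]
  congr 3
  exact filter_congr fun K _ => ⟨And.right, fun h => ⟨h ▸ hqy, h⟩⟩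

lemma abs_sum_primesLE_mul_sub_le {N M : ℕ → ℝ} {a E : ℝ}
    (h : ∀ q : ℕ, q.Prime → |N q - a * M q| ≤ E) (y : ℝ) :
    |∑ q ∈ Nat.primesLE ⌊y⌋₊, (q : ℝ) * N q
        - a * ∑ q ∈ Nat.primesLE ⌊y⌋₊, (q : ℝ) * M q| ≤ y ^ 2 * E := by
  have hE : 0 ≤ E := (abs_nonneg _).trans (h 2 Nat.prime_two)
  rw [mul_sum, ← sum_sub_distrib]
  calc _ ≤ ∑ q ∈ Nat.primesLE ⌊y⌋₊, |(q : ℝ) * N q - a * (q * M q)| :=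
        abs_sum_le_sum_abs _ _
    _ ≤ ∑ q ∈ Nat.primesLE ⌊y⌋₊, (q : ℝ) * E := sum_le_sum fun q hq => by
        rw [mul_left_comm, ← mul_sub, abs_mul, Nat.abs_cast]
        exact mul_le_mul_of_nonneg_left (h q (Nat.prime_of_mem_primesLE hq)) q.cast_nonneg
    _ = (∑ q ∈ Nat.primesLE ⌊y⌋₊, (q : ℝ)) * E := (sum_mul _ _ _).symm
    _ ≤ y ^ 2 * E := mul_le_mul_of_nonneg_right (sum_primesLE_floor_le_sq y) hE

lemma tsum_primes_eq_sum_primesLE_add_tsum {F : ℕ → ℝ}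
    (hF : Summable fun q : Nat.Primes => F q) (y : ℝ) :
    ∑' q : Nat.Primes, F q
      = ∑ q ∈ Nat.primesLE ⌊y⌋₊, F q + ∑' q : Nat.Primes, if y < q then F q else 0 := by
  have hhead : HasSum (fun q : Nat.Primes => if (q : ℝ) ≤ y then F q else 0)
      (∑ q ∈ Nat.primesLE ⌊y⌋₊, F q) := by
    have hsupp : ∀ q ∉ (Nat.primesLE ⌊y⌋₊).subtype Nat.Prime,
        (if (q : ℝ) ≤ y then F q else 0) = 0 := by
      intro q hq
      rw [mem_subtype, mem_primesLE_floor_iff] at hq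
      exact if_neg fun h => hq ⟨q.2, h⟩
    have hsum : ∑ q ∈ (Nat.primesLE ⌊y⌋₊).subtype Nat.Prime,
        (if (q : ℝ) ≤ y then F q else 0) = ∑ q ∈ Nat.primesLE ⌊y⌋₊, F q := by
      rw [sum_subtype_eq_sum_filter (fun n : ℕ => if (n : ℝ) ≤ y then F n else 0),
        filter_true_of_mem fun q hq => Nat.prime_of_mem_primesLE hq]
      exact sum_congr rfl fun q hq => if_pos (mem_primesLE_floor_iff.mp hq).2
    exact hsum ▸ hasSum_sum_of_ne_finset_zero hsupp
  have htail : HasSum (fun q : Nat.Primes => if y < q then F q else 0)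
      (∑' q : Nat.Primes, F q - ∑ q ∈ Nat.primesLE ⌊y⌋₊, F q) := by
    have hsplit : (fun q : Nat.Primes => if y < q then F q else 0)
        = fun q : Nat.Primes => F q - if (q : ℝ) ≤ y then F q else 0 := by
      funext q
      by_cases h : (q : ℝ) ≤ y
      · simp [h, not_lt.mpr h]
      · simp [h, lt_of_not_ge h]
    exact hsplit ▸ hF.hasSum.sub hhead
  rw [htail.tsum_eq]
  ring

/-- In the paper's model, the probability that `q` is the first prime at which a field is
ramified or has `Frob_q ∉ C`. -/
noncomputable def firstPrimeProb (c : ℝ) (f : ℕ → ℝ) (q : ℕ) : ℝ :=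
  (1 - c + f q) / (1 + f q) * ∏ p ∈ Nat.primesBelow q, c / (1 + f p)

section firstPrimeProb

variable {c : ℝ} {f : ℕ → ℝ}

lemma firstPrimeProb_nonneg (hc0 : 0 ≤ c) (hc1 : c ≤ 1)
    (hf0 : ∀ p : ℕ, p.Prime → 0 ≤ f p) {q : ℕ} (hq : q.Prime) :
    0 ≤ firstPrimeProb c f q := by
  have hfq := hf0 q hq
  refine mul_nonneg (div_nonneg (by linarith) (by linarith)) (prod_nonneg fun p hp => ?_)
  have := hf0 p (Nat.prime_of_mem_primesBelow hp)
  positivity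

lemma prod_primesBelow_div_le_pow (hc0 : 0 ≤ c) (hf0 : ∀ p : ℕ, p.Prime → 0 ≤ f p)
    (q : ℕ) :
    ∏ p ∈ Nat.primesBelow q, c / (1 + f p) ≤ c ^ q.primeCounting' := by
  rw [← Nat.primesBelow_card_eq_primeCounting', ← prod_const]
  refine prod_le_prod (fun p hp => ?_) fun p hp => ?_ <;>
    have := hf0 p (Nat.prime_of_mem_primesBelow hp)
  · positivity
  · exact div_le_self hc0 (by linarith)

lemma mul_firstPrimeProb_le (hc0 : 0 ≤ c) (hf0 : ∀ p : ℕ, p.Prime → 0 ≤ f p)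
    {q : ℕ} (hq : q.Prime) : c * firstPrimeProb c f q ≤ c ^ q.primeCounting := by
  have hfq := hf0 q hq
  have hprod_nonneg : 0 ≤ ∏ p ∈ Nat.primesBelow q, c / (1 + f p) :=
    prod_nonneg fun p hp => by have := hf0 p (Nat.prime_of_mem_primesBelow hp); positivity
  have hfactor : (1 - c + f q) / (1 + f q) ≤ 1 := (div_le_one (by linarith)).mpr (by linarith)
  have hcount : q.primeCounting = q.primeCounting' + 1 := by
    rw [Nat.primeCounting, Nat.primeCounting', Nat.count_succ, if_pos hq]
  calc c * firstPrimeProb c f q ≤ c * (1 * c ^ q.primeCounting') := by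
        unfold firstPrimeProb
        gcongr
        exact prod_primesBelow_div_le_pow hc0 hf0 q
    _ = c ^ q.primeCounting := by rw [hcount, pow_succ]; ring

lemma natCast_mul_firstPrimeProb_le (hc0 : 0 < c) (hf0 : ∀ p : ℕ, p.Prime → 0 ≤ f p)
    {q : ℕ} (hq : q.Prime) :
    (q : ℝ) * firstPrimeProb c f q ≤ c⁻¹ * ((q : ℝ) * c ^ q.primeCounting) := by
  rw [le_inv_mul_iff₀ hc0, mul_left_comm]
  exact mul_le_mul_of_nonneg_left (mul_firstPrimeProb_le hc0.le hf0 hq) (Nat.cast_nonneg q)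

lemma summable_primes_mul_pow_primeCounting (hc0 : 0 < c) (hc1 : c < 1) :
    Summable fun q : Nat.Primes => (q : ℝ) * c ^ (q : ℕ).primeCounting :=
  (summable_mul_pow_primeCounting hc0 hc1).subtype _

lemma summable_primes_mul_firstPrimeProb (hc0 : 0 < c) (hc1 : c < 1)
    (hf0 : ∀ p : ℕ, p.Prime → 0 ≤ f p) :
    Summable fun q : Nat.Primes => (q : ℝ) * firstPrimeProb c f q :=
  ((summable_primes_mul_pow_primeCounting hc0 hc1).mul_left c⁻¹).of_nonneg_of_le
    (fun q => mul_nonneg q.1.cast_nonneg (firstPrimeProb_nonneg hc0.le hc1.le hf0 q.2))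
    fun q => natCast_mul_firstPrimeProb_le hc0 hf0 q.2

lemma ite_mul_firstPrimeProb_nonneg (hc0 : 0 ≤ c) (hc1 : c ≤ 1)
    (hf0 : ∀ p : ℕ, p.Prime → 0 ≤ f p) (y : ℝ) (q : Nat.Primes) :
    0 ≤ if y < q then (q : ℝ) * firstPrimeProb c f q else 0 := by
  split_ifs
  · exact mul_nonneg q.1.cast_nonneg (firstPrimeProb_nonneg hc0 hc1 hf0 q.2)
  · rfl

lemma tsum_tail_mul_firstPrimeProb_le (hc0 : 0 < c) (hc1 : c < 1)
    (hf0 : ∀ p : ℕ, p.Prime → 0 ≤ f p) (y : ℝ) :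
    ∑' q : Nat.Primes, (if y < q then (q : ℝ) * firstPrimeProb c f q else 0)
      ≤ c⁻¹ * ∑' q : Nat.Primes,
        if y < q then (q : ℝ) * c ^ (q : ℕ).primeCounting else 0 := by
  have hbound : ∀ q : Nat.Primes, (if y < q then (q : ℝ) * firstPrimeProb c f q else 0)
      ≤ c⁻¹ * if y < q then (q : ℝ) * c ^ (q : ℕ).primeCounting else 0 := by
    intro q
    split_ifs
    · exact natCast_mul_firstPrimeProb_le hc0 hf0 q.2
    · simp
  have hsummable : Summable fun q : Nat.Primes =>
      c⁻¹ * if y < q then (q : ℝ) * c ^ (q : ℕ).primeCounting else 0 := by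
    refine Summable.mul_left _ ((summable_primes_mul_pow_primeCounting hc0 hc1).of_nonneg_of_le
      (fun q => ?_) fun q => ?_) <;> split_ifs <;> first | rfl | positivity
  rw [← tsum_mul_left]
  exact (hsummable.of_nonneg_of_le (ite_mul_firstPrimeProb_nonneg hc0.le hc1.le hf0 y)
    hbound).tsum_le_tsum hbound hsummable

end firstPrimeProb

theorem stmt_16_general (ι : Type) (c δ A κ : ℝ)
    (hc0 : 0 < c) (hc1 : c < 1)
    (f : ℕ → ℝ) (hf0 : ∀ p : ℕ, p.Prime → 0 ≤ f p)
    (L : ℝ → Finset ι) (nC : ι → ℕ) (hn : ∀ K : ι, (nC K).Prime)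
    (C₁ : ℝ)
    (hcount : ∀ X : ℝ, 2 ≤ X → ∀ q : ℕ, q.Prime →
      |(((L X).filter (fun K => nC K = q)).card : ℝ) -
          (1 - c + f q) / (1 + f q) *
            (∏ p ∈ Finset.filter Nat.Prime (Finset.range q), c / (1 + f p)) * A * X|
        ≤ C₁ * X ^ ((1 + 3 * δ) / 4)) :
    ∃ C₂ : ℝ, ∀ X : ℝ, 2 ≤ X →
      |(∑ K ∈ (L X).filter (fun K => (nC K : ℝ) ≤ κ * Real.log X), (nC K : ℝ)) -
          A * X * ∑' q : Nat.Primes,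
            (q : ℝ) * (1 - c + f q) / (1 + f q) *
              ∏ p ∈ Finset.filter Nat.Prime (Finset.range q), c / (1 + f p)|
        ≤ C₂ * (X / Real.log X + (κ * Real.log X) ^ 2 * X ^ ((1 + 3 * δ) / 4)
            + X * ∑' q : Nat.Primes,
                (if κ * Real.log X < (q : ℝ) then (q : ℝ) * c ^ (Nat.primeCounting q) else 0)) := by
  have hweight : (fun q : Nat.Primes => (q : ℝ) * (1 - c + f q) / (1 + f q) *
      ∏ p ∈ Finset.filter Nat.Prime (Finset.range q), c / (1 + f p))
      = fun q : Nat.Primes => (q : ℝ) * firstPrimeProb c f q := by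
    funext q
    rw [mul_div_assoc, mul_assoc]
    rfl
  refine ⟨|C₁| + |A| / c, fun X hX => ?_⟩
  set y := κ * Real.log X
  set θ := X ^ ((1 + 3 * δ) / 4)
  set R := ∑' q : Nat.Primes, if y < q then (q : ℝ) * firstPrimeProb c f q else 0
  set T := ∑' q : Nat.Primes, if y < q then (q : ℝ) * c ^ (q : ℕ).primeCounting else 0
  have hcountX : ∀ q : ℕ, q.Prime →
      |(#((L X).filter (fun K => nC K = q)) : ℝ) - A * X * firstPrimeProb c f q| ≤ C₁ * θ :=
    fun q hq => by rw [mul_comm (A * X), ← mul_assoc]; exact hcount X hX q hq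
  have hR : 0 ≤ R := tsum_nonneg (ite_mul_firstPrimeProb_nonneg hc0.le hc1.le hf0 y)
  have hT : 0 ≤ T := tsum_nonneg fun q => by split_ifs <;> first | rfl | positivity
  have hlog : 0 ≤ X / Real.log X := div_nonneg (by linarith) (Real.log_nonneg (by linarith))
  rw [hweight, sum_filter_natCast_le_eq_sum_primesLE (L X) nC (fun K _ => hn K),
    tsum_primes_eq_sum_primesLE_add_tsum (F := fun n : ℕ => (n : ℝ) * firstPrimeProb c f n)
      (summable_primes_mul_firstPrimeProb hc0 hc1 hf0) y, mul_add, ← sub_sub]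
  calc _ ≤ y ^ 2 * (C₁ * θ) + |A| * X * R := by
        refine (abs_sub _ _).trans (add_le_add (abs_sum_primesLE_mul_sub_le hcountX y) ?_)
        rw [abs_mul, abs_mul, abs_of_pos (by linarith : 0 < X), abs_of_nonneg hR]
    _ ≤ |C₁| * (y ^ 2 * θ) + |A| / c * (X * T) := by
        gcongr ?_ + ?_
        · rw [mul_left_comm]
          exact mul_le_mul_of_nonneg_right (le_abs_self C₁) (by positivity)
        · calc |A| * X * R ≤ |A| * X * (c⁻¹ * T) := by
                gcongr
                exact tsum_tail_mul_firstPrimeProb_le hc0 hc1 hf0 y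
            _ = |A| / c * (X * T) := by ring
    _ ≤ (|C₁| + |A| / c) * (X / Real.log X + y ^ 2 * θ + X * T) := by
        rw [add_mul]
        have hθ : 0 ≤ y ^ 2 * θ := by positivity
        gcongr <;> linarith [mul_nonneg (by linarith : 0 ≤ X) hT]

/-- Abstract form of the main averaging argument: if the number of fields `K ∈ L(X)`
with `n_{K,C} = q` equals `[(1-c+f(q))/(1+f(q))]·∏_{p<q}[c/(1+f(p))]·A·X`
up to `O(X^{(1+3δ)/4})`, then with `y = κ log X`,
`∑_{K ∈ L(X), n_{K,C} ≤ y} n_{K,C} = A·X·∑_q q(1-c+f(q))/(1+f(q))∏_{p<q} c/(1+f(p))`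
up to `O(X/log X + y² X^{(1+3δ)/4} + X ∑_{q>y} q c^{π(q)})`. -/
theorem stmt_16 (ι : Type) (c δ A κ : ℝ)
    (hc0 : 0 < c) (hc1 : c < 1) (hδ0 : 0 < δ) (hδ1 : δ < 1) (hA : 0 < A) (hκ : 0 < κ)
    (f : ℕ → ℝ) (hf0 : ∀ p : ℕ, p.Prime → 0 ≤ f p)
    (Cf : ℝ) (hf : ∀ p : ℕ, p.Prime → f p ≤ Cf / p)
    (L : ℝ → Finset ι) (nC : ι → ℕ) (hn : ∀ K : ι, (nC K).Prime)
    (C₁ : ℝ)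
    (hcount : ∀ X : ℝ, 2 ≤ X → ∀ q : ℕ, q.Prime →
      |(((L X).filter (fun K => nC K = q)).card : ℝ) -
          (1 - c + f q) / (1 + f q) *
            (∏ p ∈ Finset.filter Nat.Prime (Finset.range q), c / (1 + f p)) * A * X|
        ≤ C₁ * X ^ ((1 + 3 * δ) / 4)) :
    ∃ C₂ : ℝ, ∀ X : ℝ, 2 ≤ X →
      |(∑ K ∈ (L X).filter (fun K => (nC K : ℝ) ≤ κ * Real.log X), (nC K : ℝ)) -
          A * X * ∑' q : Nat.Primes,
            (q : ℝ) * (1 - c + f q) / (1 + f q) *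
              ∏ p ∈ Finset.filter Nat.Prime (Finset.range q), c / (1 + f p)|
        ≤ C₂ * (X / Real.log X + (κ * Real.log X) ^ 2 * X ^ ((1 + 3 * δ) / 4)
            + X * ∑' q : Nat.Primes,
                (if κ * Real.log X < (q : ℝ) then (q : ℝ) * c ^ (Nat.primeCounting q) else 0)) :=
  stmt_16_general ι c δ A κ hc0 hc1 f hf0 L nC hn C₁ hcount
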